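/- arXiv:2011.07659 — 4 statements merged into one kernel-verified Lean document; each statement's English description precedes it below -/
import Mathlib

section
/- Fix n ≥ 2. Let C be the free F_2[U,V]-module with basis {a, b, c, d, e, f, g} and differential ∂b = U^n·c + UV·d + V^n·e, ∂c = V·f, ∂d = U^{n-1}·f + V^{n-1}·g, ∂e = U·g, ∂a = ∂f = ∂g = 0. There is no F_2[U,V]-linear element h ∈ C with ∂h = U^{n-1}·f modulo the ideal (U^n, V^n, UV). More precisely, U^{n-1}·f is not congruent modulo (U^n, V^n, UV)·C to any element of the image of ∂. -/
open MvPolynomial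

noncomputable section

abbrev R2 : Type := MvPolynomial (Fin 2) (ZMod 2)

def Uv : R2 := X 0
def Vv : R2 := X 1

/-!
Only the `f`- and `g`-coordinates of `U^(n-1)·f - ∂h` matter. If `δ` is the constant term of the
`d`-coordinate of `h`, the `f`-coordinate has coefficient `1 - δ` on the monomial `U^(n-1)` and the
`g`-coordinate has coefficient `-δ` on `V^(n-1)`. Neither monomial is divisible by `Uⁿ`, `Vⁿ` or
`UV`, so both coefficients vanish in the monomial ideal `(Uⁿ, Vⁿ, UV)`, which is impossible.
-/

theorem Submodule.apply_mem_of_mem_smul_top {R ι : Type*} [CommSemiring R] {I : Ideal R}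
    {x : ι → R} (hx : x ∈ I • (⊤ : Submodule R (ι → R))) (i : ι) : x i ∈ I := by
  have hle : I • (⊤ : Submodule R (ι → R)) ≤ Submodule.pi Set.univ (fun _ => I) :=
    Submodule.smul_le.mpr fun r hr m _ j _ => I.mul_mem_right (m j) hr
  exact hle hx i (Set.mem_univ i)

theorem LinearMap.apply_pi_eq_sum_single {R ι κ : Type*} [CommSemiring R] [Fintype ι]
    [DecidableEq ι] (d : (ι → R) →ₗ[R] (κ → R)) (h : ι → R) (j : κ) :
    d h j = ∑ i, h i * d (Pi.single i 1) j := by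
  conv_lhs => rw [← (Pi.basisFun R ι).sum_repr h]
  simp

namespace MvPolynomial

variable {σ R : Type*} [CommSemiring R]

theorem coeff_eq_zero_of_mem_span_monomial {S : Set (σ →₀ ℕ)} {x : MvPolynomial σ R}
    (hx : x ∈ Ideal.span ((fun s => monomial s (1 : R)) '' S)) {m : σ →₀ ℕ}
    (hm : ∀ s ∈ S, ¬ s ≤ m) : coeff m x = 0 := by
  by_contra hne
  obtain ⟨s, hs, hle⟩ := mem_ideal_span_monomial_image.mp hx m (mem_support_iff.mpr hne)
  exact hm s hs hle

theorem coeff_single_mul_X_pow_add_mul_X [DecidableEq σ] {i j : σ} (hij : i ≠ j) (k : ℕ)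
    (p q : MvPolynomial σ R) :
    coeff (Finsupp.single i k) (p * X i ^ k + q * X j) = coeff 0 p := by
  rw [coeff_add, X_pow_eq_monomial, coeff_mul_monomial', if_pos le_rfl, tsub_self, coeff_mul_X',
    if_neg (by simp [hij.symm]), mul_one, add_zero]

end MvPolynomial

theorem span_Uv_pow_Vv_pow_Uv_mul_Vv (n : ℕ) :
    (Ideal.span {Uv ^ n, Vv ^ n, Uv * Vv} : Ideal R2) =
      Ideal.span ((fun s => monomial s (1 : ZMod 2)) ''
        {Finsupp.single 0 n, Finsupp.single 1 n, Finsupp.single 0 1 + Finsupp.single 1 1}) := by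
  simp only [Set.image_insert_eq, Set.image_singleton, Uv, Vv, X, monomial_pow, monomial_mul,
    one_pow, Finsupp.smul_single, smul_eq_mul, mul_one]

theorem coeff_single_eq_zero_of_mem_span {n k : ℕ} (hk : k < n) (i : Fin 2) {x : R2}
    (hx : x ∈ (Ideal.span {Uv ^ n, Vv ^ n, Uv * Vv} : Ideal R2)) :
    coeff (Finsupp.single i k) x = 0 := by
  rw [span_Uv_pow_Vv_pow_Uv_mul_Vv] at hx
  refine coeff_eq_zero_of_mem_span_monomial hx ?_
  rintro s (rfl | rfl | rfl) hle <;> fin_cases i <;>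
    simp [Finsupp.le_def, Fin.forall_fin_two] at hle <;> omega

/-- Fix `n ≥ 2` and the cable summand complex on basis `a,b,c,d,e,f,g`
(indices `0,…,6`). There is no element `h` with `∂h ≡ U^(n-1)·f` modulo the
submodule `(Uⁿ, Vⁿ, UV)·C`: that is, `U^(n-1)·f` is not congruent modulo
`(Uⁿ, Vⁿ, UV)·C` to any element of the image of `∂`. -/
theorem no_primitive_for_Upow_f
    (n : ℕ) (hn : 2 ≤ n)
    (d : (Fin 7 → R2) →ₗ[R2] (Fin 7 → R2))
    (ha : d (Pi.single 0 1) = 0)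
    (hb : d (Pi.single 1 1) = Uv ^ n • (Pi.single 2 1 : Fin 7 → R2) +
      (Uv * Vv) • (Pi.single 3 1 : Fin 7 → R2) + Vv ^ n • (Pi.single 4 1 : Fin 7 → R2))
    (hc : d (Pi.single 2 1) = Vv • (Pi.single 5 1 : Fin 7 → R2))
    (hd' : d (Pi.single 3 1) = Uv ^ (n - 1) • (Pi.single 5 1 : Fin 7 → R2) +
      Vv ^ (n - 1) • (Pi.single 6 1 : Fin 7 → R2))
    (he : d (Pi.single 4 1) = Uv • (Pi.single 6 1 : Fin 7 → R2))
    (hf : d (Pi.single 5 1) = 0)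
    (hg : d (Pi.single 6 1) = 0) :
    ¬ ∃ h : Fin 7 → R2,
      Uv ^ (n - 1) • (Pi.single 5 1 : Fin 7 → R2) - d h ∈
        ((Ideal.span {Uv ^ n, Vv ^ n, Uv * Vv} : Ideal R2) •
          (⊤ : Submodule R2 (Fin 7 → R2))) := by
  rintro ⟨h, hmem⟩
  have hdh_f : d h 5 = h 3 * X 0 ^ (n - 1) + h 2 * X 1 := by
    rw [LinearMap.apply_pi_eq_sum_single, Fin.sum_univ_seven]
    simp [ha, hb, hc, hd', he, hf, hg, Uv, Vv]
    ring
  have hdh_g : d h 6 = h 3 * X 1 ^ (n - 1) + h 4 * X 0 := by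
    rw [LinearMap.apply_pi_eq_sum_single, Fin.sum_univ_seven]
    simp [ha, hb, hc, hd', he, hf, hg, Uv, Vv]
  have hk : n - 1 < n := by omega
  have hcoeff_f :=
    coeff_single_eq_zero_of_mem_span hk 0 (Submodule.apply_mem_of_mem_smul_top hmem 5)
  have hcoeff_g :=
    coeff_single_eq_zero_of_mem_span hk 1 (Submodule.apply_mem_of_mem_smul_top hmem 6)
  rw [Pi.sub_apply, hdh_f, coeff_sub, coeff_single_mul_X_pow_add_mul_X (by decide),
    Pi.smul_apply, Pi.single_eq_same, smul_eq_mul, mul_one, Uv, coeff_X_pow, if_pos rfl,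
    sub_eq_zero] at hcoeff_f
  rw [Pi.sub_apply, hdh_g, coeff_sub, coeff_single_mul_X_pow_add_mul_X (by decide),
    Pi.smul_apply, Pi.single_eq_of_ne (by decide), smul_zero, coeff_zero, zero_sub,
    neg_eq_zero] at hcoeff_g
  exact one_ne_zero (hcoeff_f.trans hcoeff_g)
end
end

section
/- Let M and N be finitely generated modules over F_2[U], and suppose there exist injective F_2[U]-module homomorphisms M → N and N → M. If additionally M and N are finite-dimensional over F_2 in each grading of a bigrading preserved by these maps (or simply: M and N are finitely generated and the maps are injective and grading-preserving for a grading with finite-dimensional pieces), then M ≅ N as F_2[U]-modules. -/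
/-!
Over a principal ideal domain a finitely generated module splits as its torsion submodule
times the free module `M ⧸ torsion`. An injection `M → N` bounds the rank of `M` by that of `N`,
so mutual injections give free parts of equal rank, hence isomorphic. Both injections also
restrict to the torsion submodules, which are finitely generated and annihilated by some
`r ≠ 0`, hence Artinian since `R ⧸ (r)` is an Artinian ring in dimension one. On an Artinian
module the injective endomorphism `g ∘ f` is surjective, so `g` is an isomorphism of the
torsion parts.
-/

open Polynomial

noncomputable section

abbrev RU : Type := Polynomial (ZMod 2)

open Submodule

theorem IsArtinian.nonempty_linearEquiv_of_injective {R M N : Type*} [Ring R]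
    [AddCommGroup M] [Module R M] [AddCommGroup N] [Module R N] [IsArtinian R M]
    (f : M →ₗ[R] N) (g : N →ₗ[R] M) (hf : Function.Injective f)
    (hg : Function.Injective g) : Nonempty (M ≃ₗ[R] N) := by
  have hgf : Function.Surjective (g ∘ₗ f) :=
    IsArtinian.surjective_of_injective_endomorphism _ (hg.comp hf)
  exact ⟨(LinearEquiv.ofBijective g ⟨hg, (LinearMap.coe_comp g f ▸ hgf).of_comp⟩).symm⟩

section CommRing

variable {R M N : Type*} [CommRing R] [AddCommGroup M] [Module R M] [AddCommGroup N] [Module R N]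

theorem LinearMap.map_mem_torsion (f : M →ₗ[R] N) {x : M} (hx : x ∈ torsion R M) :
    f x ∈ torsion R N :=
  let ⟨a, ha⟩ := hx
  ⟨a, by rw [← LinearMap.map_smul_of_tower, ha, map_zero]⟩

theorem LinearMap.injective_restrict_torsion {f : M →ₗ[R] N} (hf : Function.Injective f) :
    Function.Injective (f.restrict fun _ => f.map_mem_torsion) :=
  fun _ _ h => Subtype.ext (hf (congrArg Subtype.val h))

theorem Module.IsTorsion.isArtinian [IsNoetherianRing R] [Ring.KrullDimLE 1 R]
    [Module.Finite R M] (hM : Module.IsTorsion R M) : IsArtinian R M := by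
  obtain ⟨r, hr, hr0⟩ := annihilator_top_inter_nonZeroDivisors hM
  have hMr : Module.IsTorsionBy R M r := fun x => Submodule.mem_annihilator.mp hr x mem_top
  let := hMr.module
  have : IsArtinianRing (R ⧸ Ideal.span {r}) :=
    isArtinian_of_tower R ((isFiniteLength_iff_isNoetherian_isArtinian.mp
      (isFiniteLength_quotient_span_singleton R hr0)).2)
  have : Module.Finite (R ⧸ Ideal.span {r}) M := Module.Finite.of_restrictScalars_finite R _ M
  exact isArtinian_of_surjective_algebraMap (R := R ⧸ Ideal.span {r}) Ideal.Quotient.mk_surjective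

theorem Module.nonempty_torsion_equiv_of_injective [IsNoetherianRing R] [Ring.KrullDimLE 1 R]
    [Module.Finite R M] (f : M →ₗ[R] N) (g : N →ₗ[R] M) (hf : Function.Injective f)
    (hg : Function.Injective g) :
    Nonempty (torsion R M ≃ₗ[R] torsion R N) :=
  have : IsArtinian R (torsion R M) := torsion_isTorsion.isArtinian
  IsArtinian.nonempty_linearEquiv_of_injective _ _
    (LinearMap.injective_restrict_torsion hf) (LinearMap.injective_restrict_torsion hg)

end CommRing

section PrincipalIdealDomain

variable {R M N : Type*} [CommRing R] [IsDomain R] [IsPrincipalIdealRing R]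
  [AddCommGroup M] [Module R M] [AddCommGroup N] [Module R N]

theorem Module.nonempty_linearEquiv_torsion_prod_quotient [Module.Finite R M] :
    Nonempty (M ≃ₗ[R] torsion R M × (M ⧸ torsion R M)) := by
  obtain ⟨l, hl⟩ := Module.projective_lifting_property (torsion R M).mkQ LinearMap.id
    (torsion R M).mkQ_surjective
  exact ⟨((LinearMap.exact_subtype_mkQ _).splitSurjectiveEquiv (torsion R M).injective_subtype
    ⟨l, hl⟩).1⟩

theorem Module.nonempty_quotient_torsion_equiv_of_injective [Module.Finite R M]
    [Module.Finite R N] (f : M →ₗ[R] N) (g : N →ₗ[R] M) (hf : Function.Injective f)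
    (hg : Function.Injective g) : Nonempty ((M ⧸ torsion R M) ≃ₗ[R] (N ⧸ torsion R N)) := by
  refine nonempty_linearEquiv_of_lift_rank_eq ?_
  rw [rank_quotient_eq_of_le_torsion le_rfl, rank_quotient_eq_of_le_torsion le_rfl]
  exact (f.lift_rank_le_of_injective hf).antisymm (g.lift_rank_le_of_injective hg)

theorem Module.nonempty_linearEquiv_of_injective_of_injective [Module.Finite R M]
    [Module.Finite R N] (f : M →ₗ[R] N) (g : N →ₗ[R] M) (hf : Function.Injective f)
    (hg : Function.Injective g) : Nonempty (M ≃ₗ[R] N) := by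
  obtain ⟨eM⟩ := Module.nonempty_linearEquiv_torsion_prod_quotient (R := R) (M := M)
  obtain ⟨eN⟩ := Module.nonempty_linearEquiv_torsion_prod_quotient (R := R) (M := N)
  obtain ⟨eT⟩ := Module.nonempty_torsion_equiv_of_injective f g hf hg
  obtain ⟨eF⟩ := Module.nonempty_quotient_torsion_equiv_of_injective f g hf hg
  exact ⟨eM.trans ((eT.prodCongr eF).trans eN.symm)⟩

end PrincipalIdealDomain

/-- If `M` and `N` are finitely generated modules over `F₂[U]` admitting injective
module homomorphisms in both directions, then `M ≅ N` as `F₂[U]`-modules. -/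
theorem mutually_embeddable_finitely_generated_iso
    {M N : Type} [AddCommGroup M] [Module RU M] [AddCommGroup N] [Module RU N]
    [Module.Finite RU M] [Module.Finite RU N]
    (f : M →ₗ[RU] N) (g : N →ₗ[RU] M)
    (hf : Function.Injective f) (hg : Function.Injective g) :
    Nonempty (M ≃ₗ[RU] N) :=
  Module.nonempty_linearEquiv_of_injective_of_injective f g hf hg
end
end

section
/- Fix n ≥ 2 and let C be the free F_2[U]-module with basis {a, b, c, d, e, f, g} and differential ∂b = U^n·c, ∂d = U^{n-1}·f, ∂e = U·g, ∂a = ∂c = ∂f = ∂g = 0. If φ : C → C is an F_2[U]-linear chain map with ⟨φ(c), c⟩ = 1 (the coefficient of c in φ(c), expressed in the basis, is 1), then the homology class of U^{n-1}·φ(c) in H_*(C) is nonzero. -/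
open Polynomial

noncomputable section

/-! The `c`-coordinate of `∂y` is `Uⁿ · y_b`, since `b` is the only basis element whose boundary
involves `c`. So `U^(n-1) · φ(c) = ∂y` would give `U^(n-1) · ⟨φ(c), c⟩ ∈ (Uⁿ)`, i.e. `⟨φ(c), c⟩` has
zero constant term. -/

theorem LinearMap.pi_apply_apply_eq_sum {ι R : Type*} [Fintype ι] [DecidableEq ι] [Semiring R]
    (f : (ι → R) →ₗ[R] (ι → R)) (x : ι → R) (k : ι) :
    f x k = ∑ i, x i * f (Pi.single i 1) k := by
  conv_lhs => rw [← Finset.univ_sum_single x]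
  simp only [map_sum, Finset.sum_apply]
  refine Finset.sum_congr rfl fun i _ => ?_
  rw [← smul_eq_mul, ← Pi.smul_apply, ← map_smul, ← Pi.single_smul', smul_eq_mul, mul_one]

theorem Polynomial.coeff_zero_eq_zero_of_X_pow_mul_eq {R : Type*} [Semiring R] {m k : ℕ}
    (hmk : m < k) {p q : R[X]} (h : X ^ m * p = X ^ k * q) : p.coeff 0 = 0 := by
  simpa [coeff_X_pow_mul', hmk.not_ge] using congrArg (coeff · m) h

/-- Fix `n ≥ 2` and the complex over `F₂[U]` on basis `a,b,c,d,e,f,g`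
(indices `0,…,6`) with `∂b = Uⁿ·c`, `∂d = U^(n-1)·f`, `∂e = U·g`,
`∂a = ∂c = ∂f = ∂g = 0`. If `φ` is an `F₂[U]`-linear chain map with
`⟨φ(c), c⟩ = 1` (the coefficient of `c` in `φ(c)` has constant term `1`), then
`U^(n-1)·φ(c)` is a cycle whose homology class is nonzero, i.e. it does not lie
in the image of `∂`. -/
theorem Upow_phi_c_nonzero_in_homology
    (n : ℕ) (hn : 2 ≤ n)
    (d φ : (Fin 7 → RU) →ₗ[RU] (Fin 7 → RU))
    (ha : d (Pi.single 0 1) = 0)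
    (hb : d (Pi.single 1 1) = (X : RU) ^ n • (Pi.single 2 1 : Fin 7 → RU))
    (hc : d (Pi.single 2 1) = 0)
    (hd' : d (Pi.single 3 1) = (X : RU) ^ (n - 1) • (Pi.single 5 1 : Fin 7 → RU))
    (he : d (Pi.single 4 1) = (X : RU) • (Pi.single 6 1 : Fin 7 → RU))
    (hf : d (Pi.single 5 1) = 0)
    (hg : d (Pi.single 6 1) = 0)
    (hchain : d ∘ₗ φ = φ ∘ₗ d)
    (hcoef : ((φ (Pi.single 2 1)) 2).coeff 0 = 1) :
    d ((X : RU) ^ (n - 1) • φ (Pi.single 2 1)) = 0 ∧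
    (X : RU) ^ (n - 1) • φ (Pi.single 2 1) ∉ LinearMap.range d := by
  have hcycle : d (φ (Pi.single 2 1)) = 0 := by
    rw [← LinearMap.comp_apply, hchain, LinearMap.comp_apply, hc, map_zero]
  refine ⟨by rw [map_smul, hcycle, smul_zero], ?_⟩
  rintro ⟨y, hy⟩
  have hcoord_c : d y 2 = X ^ n * y 1 := by
    simp [LinearMap.pi_apply_apply_eq_sum d y 2, Fin.sum_univ_seven, ha, hb, hc, hd', he, hf, hg,
      mul_comm]
  have hy_c : X ^ (n - 1) * φ (Pi.single 2 1) 2 = X ^ n * y 1 := by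
    rw [← hcoord_c, hy, Pi.smul_apply, smul_eq_mul]
  have hzero := coeff_zero_eq_zero_of_X_pow_mul_eq (by omega) hy_c
  exact zero_ne_one (hzero.symm.trans hcoef)
end
end

section
/- Fix n ≥ 2 and let C be the chain complex over R = F_2[U,V]/(UV) freely generated by {a, b, c, d, e, f, g} with differential ∂b = U^n c + V^n e, ∂c = V f, ∂d = U^{n-1} f + V^{n-1} g, ∂e = U g, ∂a = ∂f = ∂g = 0 (the reduction mod UV of the cable summand). Then ∂² = 0 over R, and the element U^{n-1} f is a cycle that is nonzero in homology H_*(C). -/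
open MvPolynomial

set_option synthInstance.maxHeartbeats 1000000
set_option maxHeartbeats 2000000

noncomputable section

/-- The ring R = F₂[U,V]/(UV). -/
abbrev Rq : Type := R2 ⧸ Ideal.span ({Uv * Vv} : Set R2)

/-- The image of U in R = F₂[U,V]/(UV). -/
def u : Rq := Ideal.Quotient.mk _ Uv
/-- The image of V in R = F₂[U,V]/(UV). -/
def v : Rq := Ideal.Quotient.mk _ Vv

/-! `∂² = 0` holds on the generators because `UⁿV = VⁿU = 0`.

A relation `U^(n-1)·f = ∂x` would have `f`- and `g`-coordinates
`x_d·U^(n-1) + x_c·V = U^(n-1)` and `x_d·V^(n-1) + x_e·U = 0`. Setting `V = 0` in the first and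
`U = 0` in the second, and cancelling powers of the variable in `F₂[X]`, shows that the constant
term of `x_d` would be both `1` and `0`. -/

theorem u_mul_v : u * v = 0 := by
  rw [u, v, ← map_mul, Ideal.Quotient.eq_zero_iff_mem]
  exact Ideal.subset_span rfl

theorem u_pow_mul_v {m : ℕ} (hm : m ≠ 0) : u ^ m * v = 0 := by
  rw [← Nat.succ_pred_eq_of_ne_zero hm, pow_succ, mul_assoc, u_mul_v, mul_zero]

theorem v_pow_mul_u {m : ℕ} (hm : m ≠ 0) : v ^ m * u = 0 := by
  rw [← Nat.succ_pred_eq_of_ne_zero hm, pow_succ, mul_assoc, mul_comm v, u_mul_v, mul_zero]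

theorem u_pow_smul_v_smul {M : Type*} [AddCommMonoid M] [Module Rq M] {m : ℕ} (hm : m ≠ 0)
    (x : M) : u ^ m • v • x = 0 := by
  rw [smul_smul, u_pow_mul_v hm]
  exact zero_smul Rq x

theorem v_pow_smul_u_smul {M : Type*} [AddCommMonoid M] [Module Rq M] {m : ℕ} (hm : m ≠ 0)
    (x : M) : v ^ m • u • x = 0 := by
  rw [smul_smul, v_pow_mul_u hm]
  exact zero_smul Rq x

theorem Rq.ringHom_ext {S : Type*} [Semiring S] {f g : Rq →+* S}
    (hu : f u = g u) (hv : f v = g v) : f = g := by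
  refine Ideal.Quotient.ringHom_ext (MvPolynomial.ringHom_ext (fun r => ?_) (fun i => ?_))
  · exact RingHom.congr_fun (RingHom.ext_zmod (f.comp (Ideal.Quotient.mk _) |>.comp C)
      (g.comp (Ideal.Quotient.mk _) |>.comp C)) r
  · fin_cases i
    exacts [hu, hv]

def Rq.lift {S : Type*} [CommRing S] [Algebra (ZMod 2) S] (a b : S) (hab : a * b = 0) :
    Rq →+* S :=
  Ideal.Quotient.lift _ (aeval ![a, b]).toRingHom fun p hp => by
    obtain ⟨q, rfl⟩ := Ideal.mem_span_singleton'.1 hp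
    simp [Uv, Vv, hab]

section lift

variable {S : Type*} [CommRing S] [Algebra (ZMod 2) S] (a b : S) (hab : a * b = 0)

@[simp]
theorem Rq.lift_u : Rq.lift a b hab u = a := by
  rw [Rq.lift, u, Ideal.Quotient.lift_mk]
  simp [Uv]

@[simp]
theorem Rq.lift_v : Rq.lift a b hab v = b := by
  rw [Rq.lift, v, Ideal.Quotient.lift_mk]
  simp [Vv]

end lift

def Rq.augmentation : Rq →+* ZMod 2 := Rq.lift 0 0 (mul_zero 0)

theorem Rq.augmentation_apply_eq_eval_zero {φ : Rq →+* Polynomial (ZMod 2)}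
    (hu : (φ u).eval 0 = 0) (hv : (φ v).eval 0 = 0) (x : Rq) :
    Rq.augmentation x = (φ x).eval 0 :=
  RingHom.congr_fun (g := (Polynomial.evalRingHom 0).comp φ)
    (Rq.ringHom_ext (by simp [Rq.augmentation, hu]) (by simp [Rq.augmentation, hv])) x

theorem Rq.augmentation_eq_one_of_mul_u_pow_add_mul_v {k : ℕ} {x y : Rq}
    (h : x * u ^ k + y * v = u ^ k) : Rq.augmentation x = 1 := by
  let φ := Rq.lift (Polynomial.X : Polynomial (ZMod 2)) 0 (mul_zero _)
  have hφ : φ x * Polynomial.X ^ k = 1 * Polynomial.X ^ k := by simpa [φ] using congrArg φ h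
  have hφx : φ x = 1 := mul_right_cancel₀ (pow_ne_zero _ Polynomial.X_ne_zero) hφ
  rw [Rq.augmentation_apply_eq_eval_zero (φ := φ) (by simp [φ]) (by simp [φ]), hφx,
    Polynomial.eval_one]

theorem Rq.augmentation_eq_zero_of_mul_v_pow_add_mul_u {k : ℕ} {x z : Rq}
    (h : x * v ^ k + z * u = 0) : Rq.augmentation x = 0 := by
  let ψ := Rq.lift 0 (Polynomial.X : Polynomial (ZMod 2)) (zero_mul _)
  have hψ : ψ x * Polynomial.X ^ k = 0 := by simpa [ψ] using congrArg ψ h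
  have hψx : ψ x = 0 := (mul_eq_zero.1 hψ).resolve_right (pow_ne_zero _ Polynomial.X_ne_zero)
  rw [Rq.augmentation_apply_eq_eval_zero (φ := ψ) (by simp [ψ]) (by simp [ψ]), hψx,
    Polynomial.eval_zero]

theorem LinearMap.pi_apply_eq_sum_smul_single {R ι M : Type*} [CommSemiring R] [Fintype ι]
    [DecidableEq ι] [AddCommMonoid M] [Module R M] (f : (ι → R) →ₗ[R] M) (x : ι → R) :
    f x = ∑ i, x i • f (Pi.single i 1) := by
  conv_lhs => rw [← Finset.univ_sum_single x, map_sum]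
  refine Finset.sum_congr rfl fun i _ => ?_
  rw [← map_smul, ← Pi.single_smul', smul_eq_mul, mul_one]

/-- Fix `n ≥ 2`. Over `R = F₂[U,V]/(UV)`, the free complex on basis `a,b,c,d,e,f,g`
(indices `0,…,6`) with `∂b = Uⁿ·c + Vⁿ·e`, `∂c = V·f`, `∂d = U^(n-1)·f + V^(n-1)·g`,
`∂e = U·g`, `∂a = ∂f = ∂g = 0` satisfies `∂² = 0`, and `U^(n-1)·f` is a cycle that
is nonzero in homology (it is not in the image of `∂`). -/
theorem cable_mod_UV_cycle_nonzero
    (n : ℕ) (hn : 2 ≤ n)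
    (d : (Fin 7 → Rq) →ₗ[Rq] (Fin 7 → Rq))
    (ha : d (Pi.single 0 1) = 0)
    (hb : d (Pi.single 1 1) = u ^ n • (Pi.single 2 1 : Fin 7 → Rq) +
      v ^ n • (Pi.single 4 1 : Fin 7 → Rq))
    (hc : d (Pi.single 2 1) = v • (Pi.single 5 1 : Fin 7 → Rq))
    (hd' : d (Pi.single 3 1) = u ^ (n - 1) • (Pi.single 5 1 : Fin 7 → Rq) +
      v ^ (n - 1) • (Pi.single 6 1 : Fin 7 → Rq))
    (he : d (Pi.single 4 1) = u • (Pi.single 6 1 : Fin 7 → Rq))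
    (hf : d (Pi.single 5 1) = 0)
    (hg : d (Pi.single 6 1) = 0) :
    d ∘ₗ d = 0 ∧
    d (u ^ (n - 1) • (Pi.single 5 1 : Fin 7 → Rq)) = 0 ∧
    u ^ (n - 1) • (Pi.single 5 1 : Fin 7 → Rq) ∉ LinearMap.range d := by
  have hn0 : n ≠ 0 := by omega
  refine ⟨?_, by rw [map_smul, hf, smul_zero], ?_⟩
  · refine (Pi.basisFun Rq (Fin 7)).ext fun i => ?_
    fin_cases i <;>
      simp [ha, hb, hc, hd', he, hf, hg, u_pow_smul_v_smul hn0, v_pow_smul_u_smul hn0]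
  · rintro ⟨x, hx⟩
    rw [d.pi_apply_eq_sum_smul_single, Fin.sum_univ_seven] at hx
    have hf_coord : x 3 * u ^ (n - 1) + x 2 * v = u ^ (n - 1) := by
      simpa [ha, hb, hc, hd', he, hf, hg, add_comm] using congrFun hx 5
    have hg_coord : x 3 * v ^ (n - 1) + x 4 * u = 0 := by
      simpa [ha, hb, hc, hd', he, hf, hg] using congrFun hx 6
    exact zero_ne_one ((Rq.augmentation_eq_zero_of_mul_v_pow_add_mul_u hg_coord).symm.trans
      (Rq.augmentation_eq_one_of_mul_u_pow_add_mul_v hf_coord))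
end
end
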